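/- Let Γ(G) be a graph product of nontrivial countable groups over a finite simple graph Γ. Then ⋂_{v ∈ V(Γ)} c₀(Γ(G), {Γ_{S_v}(G)}) = c₀(Γ(G)); that is, if a bounded function f : Γ(G) → ℂ satisfies f(g_n) → 0 for every vertex v and every sequence (g_n) in Γ(G) going to infinity relative to {Γ_{S_v}(G)}, then f vanishes at infinity. -/

import Mathlib

open scoped Pointwise ComplexOrder

namespace PPx

universe u v w

/-- A function `G → ℂ` is bounded, i.e. belongs to `ℓ^∞(G)`. -/
def Bdd {G : Type*} (f : G → ℂ) : Prop := ∃ C : ℝ, ∀ x, ‖f x‖ ≤ C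

/-- A sequence `g : ℕ → G` goes to infinity relative to the family of subgroups `S`:
for every `H ∈ S` and `t₁ t₂ : G`, `gₙ ∈ t₁ H t₂` for only finitely many `n`. -/
def TendstoInftyRel {G : Type*} [Group G] (S : Set (Subgroup G)) (g : ℕ → G) : Prop :=
  ∀ H ∈ S, ∀ t₁ t₂ : G, {n : ℕ | ∃ h ∈ H, g n = t₁ * h * t₂}.Finite

/-- `f` belongs to `c₀(G, S)`: `f` is bounded and `f(gₙ) → 0` whenever `gₙ → ∞/S`. -/
def MemC0Rel {G : Type*} [Group G] (S : Set (Subgroup G)) (f : G → ℂ) : Prop :=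
  Bdd f ∧ ∀ g : ℕ → G, TendstoInftyRel S g →
    Filter.Tendsto (fun n => f (g n)) Filter.atTop (nhds 0)

/-- `f` represents a right-translation-fixed element of `ℓ^∞(G)/c₀(G,S)`. -/
def MemFixQuot {G : Type*} [Group G] (S : Set (Subgroup G)) (f : G → ℂ) : Prop :=
  Bdd f ∧ ∀ h : G, MemC0Rel S (fun x => f (x * h) - f x)

/-- `φ` encodes a left-translation-invariant state on the C*-algebra of
right-translation-fixed elements of `ℓ^∞(G)/c₀(G,S)`. -/
def IsInvariantStateRel {G : Type*} [Group G] (S : Set (Subgroup G))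
    (φ : (G → ℂ) → ℂ) : Prop :=
  (∀ f₁ f₂, MemFixQuot S f₁ → MemFixQuot S f₂ → φ (f₁ + f₂) = φ f₁ + φ f₂) ∧
  (∀ (c : ℂ) (f), MemFixQuot S f → φ (c • f) = c * φ f) ∧
  (∀ f, MemFixQuot S f → 0 ≤ φ (star f * f)) ∧
  φ 1 = 1 ∧
  (∀ f, MemC0Rel S f → φ f = 0) ∧
  (∀ (h : G) (f), MemFixQuot S f → φ (fun x => f (h⁻¹ * x)) = φ f)

/-- `G` is properly proximal relative to the family of subgroups `S`. -/
def ProperlyProximalRel (G : Type*) [Group G] (S : Set (Subgroup G)) : Prop :=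
  ¬ ∃ φ : (G → ℂ) → ℂ, IsInvariantStateRel S φ

/-- `G` is properly proximal. -/
def ProperlyProximal (G : Type*) [Group G] : Prop :=
  ProperlyProximalRel G {⊥}

/-- The set of commutation relators defining a graph product. -/
def graphProductRels {V : Type u} (Γ : SimpleGraph V) (Gv : V → Type v)
    [∀ a, Group (Gv a)] : Set (Monoid.CoprodI Gv) :=
  {x | ∃ u w : V, Γ.Adj u w ∧ ∃ (g : Gv u) (h : Gv w),
    x = Monoid.CoprodI.of g * Monoid.CoprodI.of h *
        (Monoid.CoprodI.of g)⁻¹ * (Monoid.CoprodI.of h)⁻¹}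

/-- The graph product `Γ(G)` of the family of groups `Gv` over the graph `Γ`. -/
def GraphProduct {V : Type u} (Γ : SimpleGraph V) (Gv : V → Type v)
    [∀ a, Group (Gv a)] : Type (max u v) :=
  Monoid.CoprodI Gv ⧸ Subgroup.normalClosure (graphProductRels Γ Gv)

instance {V : Type u} (Γ : SimpleGraph V) (Gv : V → Type v) [∀ a, Group (Gv a)] :
    Group (GraphProduct Γ Gv) :=
  inferInstanceAs (Group (Monoid.CoprodI Gv ⧸ Subgroup.normalClosure (graphProductRels Γ Gv)))

/-- The graph distance between two vertices, valued in `ℕ∞` (`⊤` if not connected). -/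
noncomputable def graphDist {V : Type u} (Γ : SimpleGraph V) (a b : V) : ℕ∞ :=
  ⨅ p : Γ.Walk a b, (p.length : ℕ∞)

/-- The radius of a graph, `r(Γ) = min_v max_w d(v,w)`, valued in `ℕ∞`. -/
noncomputable def graphRadius {V : Type u} (Γ : SimpleGraph V) : ℕ∞ :=
  ⨅ a : V, ⨆ b : V, graphDist Γ a b


/-- The canonical homomorphism `G_a →* Γ(G)`. -/
def GraphProduct.of {V : Type u} (Γ : SimpleGraph V) (Gv : V → Type v)
    [∀ a, Group (Gv a)] (a : V) : Gv a →* GraphProduct Γ Gv :=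
  (QuotientGroup.mk' (Subgroup.normalClosure (graphProductRels Γ Gv))).comp Monoid.CoprodI.of

/-- For `T ⊆ V(Γ)`, the subgroup `Γ_T(G)` of `Γ(G)` generated by the vertex groups `G_v`
with `v ∈ T`. -/
def GraphProduct.vertexSubgroup {V : Type u} (Γ : SimpleGraph V) (Gv : V → Type v)
    [∀ a, Group (Gv a)] (T : Set V) : Subgroup (GraphProduct Γ Gv) :=
  ⨆ a ∈ T, (GraphProduct.of Γ Gv a).range

/-!
Let `f` be bounded and in every `c₀(Γ(G), {Γ_{S_a}(G)})`, and suppose `|f(gₙ)| ≥ ε` along a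
sequence `gₙ → ∞`. Since `f(gₙ)` does not tend to `0`, `gₙ` does not go to infinity relative to
`Γ_{S_a}(G)`; passing to subsequences one vertex at a time we may assume that, for every `a`, all
`gₙ` lie in one set `tₐ Γ_{S_a}(G) tₐ'`. Then `gₙ g₀⁻¹` lies in every conjugate
`tₐ Γ_{S_a}(G) tₐ⁻¹`, and these conjugates intersect trivially, so `gₙ` is constant: a
contradiction.

For the trivial intersection, let `x` be conjugated into every link subgroup, and retract `Γ(G)`
onto `Γ_s(G)` for growing vertex sets `s`. If the retraction onto `s` kills `x`, then adding a
vertex `b` keeps `x` killed: the conjugate `y = tᵦ⁻¹ x tᵦ` lies in `Γ_{S_b}(G)`, so its retraction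
onto `s ∪ {b}` lies in `Γ_s(G)` (as `b ∉ S_b`) and hence equals its retraction onto `s`, which is
trivial.
-/

section RelativeC0

variable {G : Type*} [Group G]

theorem TendstoInftyRel.anti {H K : Subgroup G} {g : ℕ → G} (hg : TendstoInftyRel {K} g)
    (hHK : H ≤ K) : TendstoInftyRel {H} g := by
  rintro _ rfl t₁ t₂
  exact (hg K rfl t₁ t₂).subset fun n ⟨h, hh, hn⟩ => ⟨h, hHK hh, hn⟩

theorem MemC0Rel.mono {H K : Subgroup G} {f : G → ℂ} (hf : MemC0Rel {H} f) (hHK : H ≤ K) :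
    MemC0Rel {K} f :=
  ⟨hf.1, fun g hg => hf.2 g (hg.anti hHK)⟩

theorem TendstoInftyRel.finite_setOf_eq {g : ℕ → G} (hg : TendstoInftyRel {⊥} g) (x : G) :
    {n | g n = x}.Finite :=
  (hg ⊥ rfl x 1).subset fun n (hn : g n = x) => ⟨1, one_mem _, by rw [hn, mul_one, mul_one]⟩

theorem MemC0Rel.not_tendstoInftyRel {S : Set (Subgroup G)} {f : G → ℂ} (hf : MemC0Rel S f)
    {ε : ℝ} (hε : 0 < ε) {g : ℕ → G} (hg : ∀ n, ε ≤ ‖f (g n)‖) : ¬TendstoInftyRel S g := by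
  intro hgS
  obtain ⟨n, hn⟩ := (NormedAddGroup.tendsto_nhds_zero.1 (hf.2 g hgS) ε hε).exists
  exact (hg n).not_gt hn

theorem exists_strictMono_mem_of_not_tendstoInftyRel {H : Subgroup G} {g : ℕ → G}
    (hg : ¬TendstoInftyRel {H} g) :
    ∃ φ : ℕ → ℕ, StrictMono φ ∧ ∃ t₁ t₂ : G, ∀ n, ∃ h ∈ H, g (φ n) = t₁ * h * t₂ := by
  obtain ⟨t₁, t₂, hinf⟩ : ∃ t₁ t₂ : G, {n | ∃ h ∈ H, g n = t₁ * h * t₂}.Infinite := by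
    simpa [TendstoInftyRel] using hg
  obtain ⟨φ, hφ, hmem⟩ :=
    Filter.extraction_of_frequently_atTop (Nat.frequently_atTop_iff_infinite.2 hinf)
  exact ⟨φ, hφ, t₁, t₂, hmem⟩

theorem MemC0Rel.exists_strictMono_forall_mem {ι : Type*} [Finite ι] {H : ι → Subgroup G}
    {f : G → ℂ} (hf : ∀ i, MemC0Rel {H i} f) {ε : ℝ} (hε : 0 < ε) {g : ℕ → G}
    (hg : ∀ n, ε ≤ ‖f (g n)‖) :
    ∃ φ : ℕ → ℕ, StrictMono φ ∧ ∀ i, ∃ t₁ t₂ : G, ∀ n, ∃ h ∈ H i, g (φ n) = t₁ * h * t₂ := by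
  classical
  have : Fintype ι := Fintype.ofFinite ι
  suffices ∀ s : Finset ι, ∃ φ : ℕ → ℕ, StrictMono φ ∧
      ∀ i ∈ s, ∃ t₁ t₂ : G, ∀ n, ∃ h ∈ H i, g (φ n) = t₁ * h * t₂ by
    obtain ⟨φ, hφ, hmem⟩ := this Finset.univ
    exact ⟨φ, hφ, fun i => hmem i (Finset.mem_univ i)⟩
  intro s
  induction s using Finset.induction_on with
  | empty => exact ⟨id, strictMono_id, by simp⟩
  | @insert i s _ ih =>
    obtain ⟨φ, hφ, hmem⟩ := ih
    obtain ⟨ψ, hψ, t₁, t₂, hψmem⟩ := exists_strictMono_mem_of_not_tendstoInftyRel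
      ((hf i).not_tendstoInftyRel hε fun n => hg (φ n))
    refine ⟨φ ∘ ψ, hφ.comp hψ, fun j hj => ?_⟩
    rcases Finset.mem_insert.1 hj with rfl | hj
    · exact ⟨t₁, t₂, hψmem⟩
    · obtain ⟨u₁, u₂, hu⟩ := hmem j hj
      exact ⟨u₁, u₂, fun n => hu (ψ n)⟩

theorem eq_of_forall_mem_doubleTranslate {ι : Type*} {H : ι → Subgroup G} {t₁ t₂ : ι → G}
    (hH : ⨅ i, MulAut.conj (t₁ i) • H i = ⊥) {x y : G}
    (hx : ∀ i, ∃ h ∈ H i, x = t₁ i * h * t₂ i) (hy : ∀ i, ∃ h ∈ H i, y = t₁ i * h * t₂ i) :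
    x = y := by
  rw [← mul_inv_eq_one, ← Subgroup.mem_bot, ← hH, Subgroup.mem_iInf]
  intro i
  obtain ⟨h, hh, rfl⟩ := hx i
  obtain ⟨k, hk, hyk⟩ := hy i
  have hconj : t₁ i * h * t₂ i * y⁻¹ = MulAut.conj (t₁ i) (h * k⁻¹) := by
    rw [hyk, MulAut.conj_apply]
    group
  rw [hconj]
  exact Subgroup.smul_mem_pointwise_smul _ _ _ (mul_mem hh (inv_mem hk))

theorem memC0Rel_bot_of_forall_memC0Rel {ι : Type*} [Finite ι] {H : ι → Subgroup G}
    (hH : ∀ t : ι → G, ⨅ i, MulAut.conj (t i) • H i = ⊥) {f : G → ℂ}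
    (hf : ∀ i, MemC0Rel {H i} f) : MemC0Rel {⊥} f := by
  refine ⟨?_, fun g hg => ?_⟩
  · rcases isEmpty_or_nonempty ι with _ | ⟨⟨i⟩⟩
    · have htriv (x : G) : x = 1 :=
        Subgroup.mem_bot.1 ((hH isEmptyElim).le (Subgroup.mem_iInf.2 isEmptyElim))
      exact ⟨‖f 1‖, fun x => by rw [htriv x]⟩
    · exact (hf i).1
  · by_contra hfg
    rw [NormedAddGroup.tendsto_nhds_zero] at hfg
    push Not at hfg
    obtain ⟨ε, hε, hfreq⟩ := hfg
    obtain ⟨e, he, hge⟩ := Filter.extraction_of_frequently_atTop hfreq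
    obtain ⟨φ, hφ, hmem⟩ := MemC0Rel.exists_strictMono_forall_mem hf hε hge
    choose t₁ t₂ hmem using hmem
    have hconst (n : ℕ) : g (e (φ n)) = g (e (φ 0)) :=
      eq_of_forall_mem_doubleTranslate (hH t₁) (fun i => hmem i n) (fun i => hmem i 0)
    exact Set.infinite_of_injective_forall_mem (he.comp hφ).injective hconst
      (hg.finite_setOf_eq _)

theorem iInter_memC0Rel_eq_memC0Rel_bot {ι : Type*} [Finite ι] (H : ι → Subgroup G)
    (hH : ∀ t : ι → G, ⨅ i, MulAut.conj (t i) • H i = ⊥) :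
    ⋂ i, {f : G → ℂ | MemC0Rel {H i} f} = {f | MemC0Rel {⊥} f} := by
  ext f
  rw [Set.mem_iInter]
  exact ⟨memC0Rel_bot_of_forall_memC0Rel hH, fun hf i => hf.mono bot_le⟩

end RelativeC0

namespace GraphProduct

variable {V : Type u} (Γ : SimpleGraph V) (Gv : V → Type v) [∀ a, Group (Gv a)]

theorem commute_of {u w : V} (h : Γ.Adj u w) (g : Gv u) (k : Gv w) :
    Commute (of Γ Gv u g) (of Γ Gv w k) := by
  have hrel : Monoid.CoprodI.of g * Monoid.CoprodI.of k * (Monoid.CoprodI.of g)⁻¹ *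
      (Monoid.CoprodI.of k)⁻¹ ∈ Subgroup.normalClosure (graphProductRels Γ Gv) :=
    Subgroup.subset_normalClosure ⟨u, w, h, g, k, rfl⟩
  rw [← QuotientGroup.eq_one_iff] at hrel
  simp only [QuotientGroup.mk_mul, QuotientGroup.mk_inv] at hrel
  exact commutatorElement_eq_one_iff_commute.1 hrel

theorem hom_ext {K : Type w} [Monoid K] {φ ψ : GraphProduct Γ Gv →* K}
    (h : ∀ (a : V) (g : Gv a), φ (of Γ Gv a g) = ψ (of Γ Gv a g)) : φ = ψ :=
  QuotientGroup.monoidHom_ext _ (Monoid.CoprodI.ext_hom _ _ fun a => MonoidHom.ext (h a))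

def lift {K : Type w} [Group K] (F : ∀ a, Gv a →* K)
    (hF : ∀ u w, Γ.Adj u w → ∀ g k, Commute (F u g) (F w k)) : GraphProduct Γ Gv →* K :=
  QuotientGroup.lift _ (Monoid.CoprodI.lift F) <| Subgroup.normalClosure_le_normal <| by
    rintro _ ⟨u, w, huw, g, k, rfl⟩
    simp only [SetLike.mem_coe, MonoidHom.mem_ker, map_mul, map_inv, Monoid.CoprodI.lift_of]
    exact commutatorElement_eq_one_iff_commute.2 (hF u w huw g k)

@[simp] theorem lift_of {K : Type w} [Group K] (F : ∀ a, Gv a →* K)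
    (hF : ∀ u w, Γ.Adj u w → ∀ g k, Commute (F u g) (F w k)) (a : V) (g : Gv a) :
    lift Γ Gv F hF (of Γ Gv a g) = F a g :=
  Monoid.CoprodI.lift_of F g

theorem of_mem_vertexSubgroup {T : Set V} {a : V} (ha : a ∈ T) (g : Gv a) :
    of Γ Gv a g ∈ vertexSubgroup Γ Gv T :=
  le_iSup₂ (f := fun a (_ : a ∈ T) => (of Γ Gv a).range) a ha ⟨g, rfl⟩

theorem vertexSubgroup_mono {T T' : Set V} (h : T ⊆ T') :
    vertexSubgroup Γ Gv T ≤ vertexSubgroup Γ Gv T' :=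
  biSup_mono h

open Classical in
noncomputable def retract (s : Set V) : GraphProduct Γ Gv →* GraphProduct Γ Gv :=
  lift Γ Gv (fun a => if a ∈ s then of Γ Gv a else (1 : Gv a →* GraphProduct Γ Gv))
    fun u w huw g k => by split_ifs <;> simp [commute_of Γ Gv huw]

variable {Γ Gv}

theorem retract_of_mem {s : Set V} {a : V} (ha : a ∈ s) (g : Gv a) :
    retract Γ Gv s (of Γ Gv a g) = of Γ Gv a g := by
  simp [retract, ha]

theorem retract_of_notMem {s : Set V} {a : V} (ha : a ∉ s) (g : Gv a) :
    retract Γ Gv s (of Γ Gv a g) = 1 := by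
  simp [retract, ha]

theorem retract_empty : retract Γ Gv ∅ = 1 :=
  hom_ext Γ Gv fun _ g => retract_of_notMem (Set.notMem_empty _) g

theorem retract_univ : retract Γ Gv Set.univ = MonoidHom.id _ :=
  hom_ext Γ Gv fun _ g => retract_of_mem (Set.mem_univ _) g

theorem retract_retract {s t : Set V} (hts : t ⊆ s) (x : GraphProduct Γ Gv) :
    retract Γ Gv t (retract Γ Gv s x) = retract Γ Gv t x := by
  refine DFunLike.congr_fun (hom_ext (φ := (retract Γ Gv t).comp (retract Γ Gv s)) Γ Gv
    fun a g => ?_) x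
  by_cases has : a ∈ s
  · rw [MonoidHom.comp_apply, retract_of_mem has]
  · rw [MonoidHom.comp_apply, retract_of_notMem has, map_one,
      retract_of_notMem fun hat => has (hts hat)]

theorem retract_eq_self {s : Set V} {x : GraphProduct Γ Gv} (hx : x ∈ vertexSubgroup Γ Gv s) :
    retract Γ Gv s x = x := by
  have : vertexSubgroup Γ Gv s ≤ MonoidHom.eqLocus (retract Γ Gv s) (MonoidHom.id _) :=
    iSup₂_le fun _ ha => by
      rintro _ ⟨g, rfl⟩
      exact retract_of_mem ha g
  exact this hx

theorem retract_mem_vertexSubgroup_inter {s T : Set V} {x : GraphProduct Γ Gv}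
    (hx : x ∈ vertexSubgroup Γ Gv T) : retract Γ Gv s x ∈ vertexSubgroup Γ Gv (T ∩ s) := by
  have : vertexSubgroup Γ Gv T ≤ (vertexSubgroup Γ Gv (T ∩ s)).comap (retract Γ Gv s) :=
    iSup₂_le fun a ha => by
      rintro _ ⟨g, rfl⟩
      rw [Subgroup.mem_comap]
      by_cases has : a ∈ s
      · rw [retract_of_mem has]
        exact of_mem_vertexSubgroup Γ Gv (Set.mem_inter ha has) g
      · rw [retract_of_notMem has]
        exact one_mem _
  exact this hx

theorem retract_eq_one_of_forall_conj_mem_link {s : Set V} (hs : s.Finite)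
    {t : V → GraphProduct Γ Gv} {x : GraphProduct Γ Gv}
    (hx : ∀ a ∈ s, (t a)⁻¹ * x * t a ∈ vertexSubgroup Γ Gv (Γ.neighborSet a)) :
    retract Γ Gv s x = 1 := by
  induction s, hs using Set.Finite.induction_on with
  | empty => rw [retract_empty, MonoidHom.one_apply]
  | @insert b s _ _ ih =>
    have hxs : retract Γ Gv s x = 1 := ih fun a ha => hx a (Set.mem_insert_of_mem b ha)
    have hlink : Γ.neighborSet b ∩ insert b s ⊆ s :=
      fun a ha => ha.2.resolve_left (Γ.ne_of_adj ha.1).symm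
    have hy : retract Γ Gv (insert b s) ((t b)⁻¹ * x * t b) = 1 := by
      rw [← retract_eq_self (vertexSubgroup_mono Γ Gv hlink
          (retract_mem_vertexSubgroup_inter (hx b (Set.mem_insert b s)))),
        retract_retract (Set.subset_insert b s), map_mul, map_mul, hxs, mul_one, map_inv,
        inv_mul_cancel]
    rwa [map_mul, map_mul, map_inv, mul_eq_one_iff_eq_inv, mul_eq_left] at hy

theorem iInf_conj_vertexSubgroup_neighborSet_eq_bot [Finite V] (t : V → GraphProduct Γ Gv) :
    ⨅ a, MulAut.conj (t a) • vertexSubgroup Γ Gv (Γ.neighborSet a) = ⊥ := by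
  refine (Subgroup.eq_bot_iff_forall _).2 fun x hx => ?_
  rw [← MonoidHom.id_apply (GraphProduct Γ Gv) x, ← retract_univ]
  refine retract_eq_one_of_forall_conj_mem_link (t := t) Set.finite_univ fun a _ => ?_
  simpa [Subgroup.mem_pointwise_smul_iff_inv_smul_mem] using Subgroup.mem_iInf.1 hx a

end GraphProduct

theorem iInter_memC0Rel_linkSubgroup_eq_c0_general
    {V : Type u} [Fintype V] (Γ : SimpleGraph V) (Gv : V → Type v)
    [∀ a, Group (Gv a)] :
    (⋂ a : V, {f : GraphProduct Γ Gv → ℂ |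
        MemC0Rel {GraphProduct.vertexSubgroup Γ Gv (Γ.neighborSet a)} f}) =
      {f : GraphProduct Γ Gv → ℂ | MemC0Rel {⊥} f} :=
  iInter_memC0Rel_eq_memC0Rel_bot _ GraphProduct.iInf_conj_vertexSubgroup_neighborSet_eq_bot

/-- For a graph product of nontrivial countable groups over a finite simple graph,
`⋂_{v ∈ V(Γ)} c₀(Γ(G), {Γ_{S_v}(G)}) = c₀(Γ(G))`: a bounded function which vanishes along
every sequence going to infinity relative to each link subgroup `Γ_{S_v}(G)` vanishes at
infinity. -/
theorem iInter_memC0Rel_linkSubgroup_eq_c0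
    {V : Type u} [Fintype V] (Γ : SimpleGraph V) (Gv : V → Type v)
    [∀ a, Group (Gv a)] [∀ a, Nontrivial (Gv a)] [∀ a, Countable (Gv a)] :
    (⋂ a : V, {f : GraphProduct Γ Gv → ℂ |
        MemC0Rel {GraphProduct.vertexSubgroup Γ Gv (Γ.neighborSet a)} f}) =
      {f : GraphProduct Γ Gv → ℂ | MemC0Rel {⊥} f} :=
  iInter_memC0Rel_linkSubgroup_eq_c0_general Γ Gv

end PPx
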